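/- For all bimoulds A, B, C such that B(∅) = 0, one has answamu(mu(A,B), C) = mu(A, answamu(B,C)). -/

import Mathlib

/-- A bimould: a function assigning to every finite sequence of pairs `(u, v)` of
elements of `K` an element of `R`. -/
abbrev Bimould (K R : Type*) := List (K × K) → R

variable {K R : Type*} [CommRing K] [CommRing R]

/-- The (non-commutative) mould product `mu`:
`mu(A,B)(w) = Σ_{w = a·b} A(a) B(b)` over all prefix/suffix decompositions of `w`. -/
def mu (A B : Bimould K R) : Bimould K R :=
  fun w => ∑ i ∈ Finset.range (w.length + 1), A (w.take i) * B (w.drop i)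

/-- The sequence transformation underlying `swap`: for `w = ((u_1,v_1),…,(u_r,v_r))` it
returns `((v_r, u_1+⋯+u_r), (v_{r-1}-v_r, u_1+⋯+u_{r-1}), …, (v_1-v_2, u_1))`. -/
def swapSeq (w : List (K × K)) : List (K × K) :=
  List.ofFn fun i : Fin w.length =>
    ((w.getD (w.length - 1 - (i : ℕ)) (0, 0)).2 - (w.getD (w.length - (i : ℕ)) (0, 0)).2,
      ((w.take (w.length - (i : ℕ))).map Prod.fst).sum)

/-- The involution `swap`. -/
def swap (A : Bimould K R) : Bimould K R := fun w => A (swapSeq w)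

/-- The involution `anti`, reversing the sequence of letters. -/
def anti (A : Bimould K R) : Bimould K R := fun w => A w.reverse

/-- `swamu`, the `swap`-conjugation of `mu`. -/
def swamu (A B : Bimould K R) : Bimould K R := swap (mu (swap A) (swap B))

/-- `answamu`, the `swap ∘ anti`-conjugation of `mu`. -/
def answamu (A B : Bimould K R) : Bimould K R :=
  anti (swap (mu (swap (anti A)) (swap (anti B))))

/-! Unwinding `swap` and `anti`, `answamu A B w` is the sum over `0 ≤ i ≤ r` of
`A (w_1, …, w_{i-1}, (u_i + ⋯ + u_r, v_i)) * B ((u_{i+1}, v_{i+1} - v_i), …, (u_r, v_r - v_i))`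
(`answamu_apply`). The left word agrees with `w` except in its last letter, and cutting off its
first `j < i` letters gives the left word of the same shape for `w_{j+1} ⋯ w_r`, while the right
word depends on `i` only through the cut in `w`. So expanding `mu A B` on the left word (its last
term vanishes since `B ∅ = 0`) and exchanging the two sums yields `mu A (answamu B C)`. -/

lemma List.getD_drop {α : Type*} (l : List α) (d : α) (i j : ℕ) :
    (l.drop i).getD j d = l.getD (i + j) d := by
  simp [List.getD_eq_getElem?_getD]

lemma List.getD_take {α : Type*} (l : List α) (d : α) {i j : ℕ} (h : j < i) :
    (l.take i).getD j d = l.getD j d := by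
  simp [List.getD_eq_getElem?_getD, h]

def uSum (w : List (K × K)) : K := (w.map Prod.fst).sum

/-- `vCoord w i` is `v_i` in the 1-indexed notation `w = ((u_1,v_1),…,(u_r,v_r))`, with `v_0 = 0`. -/
def vCoord (w : List (K × K)) : ℕ → K
  | 0 => 0
  | i + 1 => (w.getD i (0, 0)).2

/-- `answamuPrefix w i = (w_1, …, w_{i-1}, (u_i + ⋯ + u_r, v_i))` for `i ≥ 1`. -/
def answamuPrefix (w : List (K × K)) : ℕ → List (K × K)
  | 0 => []
  | i + 1 => w.take i ++ [(uSum (w.drop i), vCoord w (i + 1))]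

/-- `answamuSuffix w i = ((u_{i+1}, v_{i+1} - v_i), …, (u_r, v_r - v_i))`. -/
def answamuSuffix (w : List (K × K)) (i : ℕ) : List (K × K) :=
  (w.drop i).map fun p => (p.1, p.2 - vCoord w i)

lemma uSum_append (a b : List (K × K)) : uSum (a ++ b) = uSum a + uSum b := by
  simp [uSum]

lemma uSum_drop_eq_add {w : List (K × K)} {i : ℕ} (h : i < w.length) :
    uSum (w.drop i) = w[i].1 + uSum (w.drop (i + 1)) := by
  rw [List.drop_eq_getElem_cons h, uSum, List.map_cons, List.sum_cons, uSum]

@[simp] lemma length_swapSeq (w : List (K × K)) : (swapSeq w).length = w.length := by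
  simp [swapSeq]

lemma getElem_swapSeq (t : List (K × K)) (k : ℕ) (h : k < (swapSeq t).length) :
    (swapSeq t)[k] = ((t.getD (t.length - 1 - k) (0, 0)).2 - (t.getD (t.length - k) (0, 0)).2,
      uSum (t.take (t.length - k))) := by
  simp [swapSeq, uSum]

lemma getElem_reverse_swapSeq (t : List (K × K)) (j : ℕ) (h : j < (swapSeq t).reverse.length) :
    (swapSeq t).reverse[j] =
      ((t.getD j (0, 0)).2 - (t.getD (j + 1) (0, 0)).2, uSum (t.take (j + 1))) := by
  simp only [List.length_reverse, length_swapSeq] at h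
  rw [List.getElem_reverse, getElem_swapSeq]
  simp only [length_swapSeq]
  congr 4 <;> omega

lemma snd_getD_reverse_eq_vCoord (w : List (K × K)) {i : ℕ} (h : i ≤ w.length) :
    (w.reverse.getD (w.length - i) (0, 0)).2 = vCoord w i := by
  cases i with
  | zero => simp [vCoord]
  | succ i =>
    rw [List.getD_reverse _ (by omega), vCoord]
    congr 3
    omega

lemma getD_swapSeq_reverse {w : List (K × K)} {i : ℕ} (h : i < w.length) :
    (swapSeq w.reverse).getD i (0, 0) = (vCoord w (i + 1) - vCoord w i, uSum (w.drop i)) := by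
  rw [List.getD_eq_getElem _ _ (by simpa), getElem_swapSeq]
  simp only [List.length_reverse, List.take_reverse]
  rw [show w.length - 1 - i = w.length - (i + 1) by omega,
    snd_getD_reverse_eq_vCoord w (by omega), snd_getD_reverse_eq_vCoord w h.le,
    show w.length - (w.length - i) = i by omega]
  simp [uSum]

lemma snd_getD_swapSeq_reverse (w : List (K × K)) (i : ℕ) :
    ((swapSeq w.reverse).getD i (0, 0)).2 = uSum (w.drop i) := by
  by_cases h : i < w.length
  · rw [getD_swapSeq_reverse h]
  · rw [List.getD_eq_default _ _ (by simp; omega), List.drop_eq_nil_of_le (by omega)]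
    rfl

lemma uSum_take_swapSeq_reverse (w : List (K × K)) {m : ℕ} (h : m ≤ w.length) :
    uSum ((swapSeq w.reverse).take m) = vCoord w m := by
  induction m with
  | zero => rfl
  | succ m ih =>
    have hm : m < (swapSeq w.reverse).length := by simp; omega
    rw [List.take_succ_eq_append_getElem hm, uSum_append, ih (by omega),
      ← List.getD_eq_getElem _ (0, 0), getD_swapSeq_reverse (by omega)]
    simp [uSum]

lemma uSum_take_drop_swapSeq_reverse (w : List (K × K)) {i m : ℕ} (h : i + m ≤ w.length) :
    uSum (((swapSeq w.reverse).drop i).take m) = vCoord w (i + m) - vCoord w i := by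
  rw [← uSum_take_swapSeq_reverse w h, List.take_add, uSum_append,
    uSum_take_swapSeq_reverse w (by omega)]
  ring

lemma reverse_swapSeq_drop_swapSeq_reverse (w : List (K × K)) {i : ℕ} (h : i ≤ w.length) :
    (swapSeq ((swapSeq w.reverse).drop i)).reverse = answamuSuffix w i := by
  refine List.ext_getElem (by simp [answamuSuffix]) fun j h₁ h₂ => ?_
  have hj : i + j < w.length := by simp [answamuSuffix] at h₂; omega
  rw [getElem_reverse_swapSeq, uSum_take_drop_swapSeq_reverse w (by omega), List.getD_drop,
    List.getD_drop, snd_getD_swapSeq_reverse, snd_getD_swapSeq_reverse, uSum_drop_eq_add hj]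
  simp [answamuSuffix, vCoord, hj, add_assoc]

lemma reverse_swapSeq_take_swapSeq_reverse (w : List (K × K)) {i : ℕ} (h : i ≤ w.length) :
    (swapSeq ((swapSeq w.reverse).take i)).reverse = answamuPrefix w i := by
  cases i with
  | zero => rfl
  | succ i =>
    refine List.ext_getElem (by simp [answamuPrefix]; omega) fun j h₁ h₂ => ?_
    have hj : j ≤ i := by simp at h₁; omega
    rw [getElem_reverse_swapSeq, List.take_take, min_eq_left (by omega),
      uSum_take_swapSeq_reverse w (by omega), List.getD_take _ _ (by omega),
      snd_getD_swapSeq_reverse]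
    simp only [answamuPrefix]
    rcases hj.lt_or_eq with hj | rfl
    · rw [List.getD_take _ _ (by omega), snd_getD_swapSeq_reverse, uSum_drop_eq_add (by omega),
        List.getElem_append_left (by simp; omega), List.getElem_take]
      simp [vCoord, show j < w.length by omega]
    · rw [List.getD_eq_default _ _ (by simp), List.getElem_append_right (by simp)]
      simp

theorem answamu_apply (A B : Bimould K R) (w : List (K × K)) :
    answamu A B w = ∑ i ∈ Finset.range (w.length + 1),
      A (answamuPrefix w i) * B (answamuSuffix w i) := by
  simp only [answamu, anti, swap, mu, length_swapSeq, List.length_reverse]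
  refine Finset.sum_congr rfl fun i hi => ?_
  have hi : i ≤ w.length := Finset.mem_range_succ_iff.mp hi
  rw [reverse_swapSeq_take_swapSeq_reverse w hi, reverse_swapSeq_drop_swapSeq_reverse w hi]

lemma answamu_apply_of_apply_nil_eq_zero {B : Bimould K R} (hB : B [] = 0) (C : Bimould K R)
    (w : List (K × K)) :
    answamu B C w = ∑ k ∈ Finset.range w.length,
      B (answamuPrefix w (k + 1)) * C (answamuSuffix w (k + 1)) := by
  rw [answamu_apply, Finset.sum_range_succ', answamuPrefix, hB, zero_mul, add_zero]

lemma length_answamuPrefix (w : List (K × K)) {i : ℕ} (h : i ≤ w.length) :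
    (answamuPrefix w i).length = i := by
  cases i <;> simp [answamuPrefix]; omega

lemma answamuPrefix_take (w : List (K × K)) {i j : ℕ} (hj : j < i) (hi : i ≤ w.length) :
    (answamuPrefix w i).take j = w.take j := by
  obtain ⟨i, rfl⟩ : ∃ i', i = i' + 1 := ⟨i - 1, by omega⟩
  rw [answamuPrefix, List.take_append_of_le_length (by simp; omega), List.take_take,
    min_eq_left (by omega)]

lemma answamuPrefix_drop (w : List (K × K)) {i j : ℕ} (hj : j < i) (hi : i ≤ w.length) :
    (answamuPrefix w i).drop j = answamuPrefix (w.drop j) (i - j) := by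
  obtain ⟨i, rfl⟩ : ∃ i', i = i' + 1 := ⟨i - 1, by omega⟩
  rw [show i + 1 - j = i - j + 1 by omega]
  simp only [answamuPrefix, vCoord]
  rw [List.drop_append_of_le_length (by simp; omega), List.drop_take, List.drop_drop,
    List.getD_drop, show j + (i - j) = i by omega]

lemma answamuSuffix_drop (w : List (K × K)) (j k : ℕ) :
    answamuSuffix (w.drop j) (k + 1) = answamuSuffix w (j + k + 1) := by
  simp only [answamuSuffix, vCoord, List.drop_drop, List.getD_drop, add_assoc]

lemma mu_answamuPrefix {A B : Bimould K R} (hB : B [] = 0) (w : List (K × K)) {i : ℕ}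
    (hi : i ≤ w.length) :
    mu A B (answamuPrefix w i) =
      ∑ j ∈ Finset.range i, A (w.take j) * B (answamuPrefix (w.drop j) (i - j)) := by
  rw [mu, length_answamuPrefix w hi, Finset.sum_range_succ,
    List.drop_eq_nil_of_le (length_answamuPrefix w hi).le, hB, mul_zero, add_zero]
  refine Finset.sum_congr rfl fun j hj => ?_
  have hj := Finset.mem_range.mp hj
  rw [answamuPrefix_take w hj hi, answamuPrefix_drop w hj hi]

/-- For bimoulds `A, B, C` with `B(∅) = 0`, `answamu(mu(A,B), C) = mu(A, answamu(B,C))`. -/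
theorem stmt_7 (A B C : Bimould K R) (hB : B [] = 0) :
    answamu (mu A B) C = mu A (answamu B C) := by
  funext w
  calc answamu (mu A B) C w
      = ∑ i ∈ Finset.range (w.length + 1), ∑ j ∈ Finset.range i,
          A (w.take j) * (B (answamuPrefix (w.drop j) (i - j)) * C (answamuSuffix w i)) := by
        rw [answamu_apply]
        refine Finset.sum_congr rfl fun i hi => ?_
        rw [mu_answamuPrefix hB w (Finset.mem_range_succ_iff.mp hi), Finset.sum_mul]
        simp only [mul_assoc]
    _ = ∑ j ∈ Finset.range (w.length + 1), ∑ i ∈ Finset.Ico (j + 1) (w.length + 1),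
          A (w.take j) * (B (answamuPrefix (w.drop j) (i - j)) * C (answamuSuffix w i)) :=
        Finset.sum_comm' fun i j => by simp only [Finset.mem_range, Finset.mem_Ico]; omega
    _ = mu A (answamu B C) w := by
        simp only [mu, answamu_apply_of_apply_nil_eq_zero hB, List.length_drop, Finset.mul_sum]
        refine Finset.sum_congr rfl fun j _ => ?_
        rw [Finset.sum_Ico_eq_sum_range, show w.length + 1 - (j + 1) = w.length - j by omega]
        refine Finset.sum_congr rfl fun k _ => ?_
        rw [answamuSuffix_drop, show j + 1 + k - j = k + 1 by omega, add_right_comm]
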